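/- (The model with the largest rescaler is a fixed point of the iteration.) Suppose i₁ ∈ {1,…,n} satisfies λ^{i₁}(j) = max_{1≤i≤n} λ^i(j) for every j ≥ 1 (the largest rescaler is always attained by model i₁). Then δ^{i₁}(j) = δ^{i₁}(1) for all j ≥ 1, and λ^{i₁}(j) = 1 for all j ≥ 2. -/

import Mathlib

/-!
Write `a i` for the `k`-th coordinate of the outputs of an iteration. They are `λ^i m_i u` with
masks `m_i ∈ {0, 1}` and one common unified value `u`, so all nonzero ones share the sign of `u`.
If model `i₁` carries the largest rescaler and `a i₁ ≠ 0`, it dominates every `|a i|`; then the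
next unified value is `a i₁` itself, its mask is `1`, and the next rescaler of `i₁` is `1`.
Hence from the second iteration on the iteration leaves `δ^{i₁}` unchanged.
-/

namespace Real

theorem sign_eq_sign_of_mul_pos {x y : ℝ} (h : 0 < x * y) : sign x = sign y := by
  rcases lt_or_gt_of_ne (left_ne_zero_of_mul h.ne') with hx | hx
  · rw [sign_of_neg hx, sign_of_neg (neg_of_mul_pos_right h hx.le)]
  · rw [sign_of_pos hx, sign_of_pos (pos_of_mul_pos_right h hx.le)]

theorem sign_mul_abs (x : ℝ) : sign x * |x| = x := by
  rcases lt_trichotomy x 0 with h | rfl | h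
  · rw [sign_of_neg h, abs_of_neg h]; ring
  · simp
  · rw [sign_of_pos h, abs_of_pos h, one_mul]

end Real

section Unification

variable {ι : Type*} {a : ι → ℝ} {i₁ : ι}

theorem sign_sum_eq_of_aligned [Fintype ι] (hal : ∀ i, 0 ≤ a i * a i₁) (h0 : a i₁ ≠ 0) :
    Real.sign (∑ i, a i) = Real.sign (a i₁) := by
  refine Real.sign_eq_sign_of_mul_pos ?_
  calc 0 < a i₁ * a i₁ := mul_self_pos.mpr h0
    _ ≤ ∑ i, a i * a i₁ := Finset.single_le_sum (fun i _ => hal i) (Finset.mem_univ i₁)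
    _ = (∑ i, a i) * a i₁ := (Finset.sum_mul ..).symm

theorem sign_mul_max_eq_of_aligned_of_dominant [Fintype ι] {γ ε : ℝ}
    (hal : ∀ i, 0 ≤ a i * a i₁) (hdom : ∀ i, |a i| ≤ |a i₁|) (h0 : a i₁ ≠ 0)
    (hγ : γ = Real.sign (∑ i, a i))
    (hε : γ ≠ 0 →
      (∃ i, Real.sign (a i) = γ ∧ |a i| = ε) ∧ (∀ i, Real.sign (a i) = γ → |a i| ≤ ε)) :
    γ * ε = a i₁ := by
  have hγ₁ : γ = Real.sign (a i₁) := hγ.trans (sign_sum_eq_of_aligned hal h0)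
  obtain ⟨⟨i, -, rfl⟩, hle⟩ := hε (hγ₁ ▸ mt Real.sign_eq_zero_iff.mp h0)
  rw [hγ₁, le_antisymm (hdom i) (hle i₁ hγ₁.symm), Real.sign_mul_abs]

theorem aligned_dominant_of_rescaled_masks {l m : ι → ℝ} {u : ℝ}
    (ha : ∀ i, a i = l i * (m i * u)) (hm : ∀ i, m i = 0 ∨ m i = 1)
    (hl : ∀ i, 0 ≤ l i) (hlmax : ∀ i, l i ≤ l i₁) (h0 : a i₁ ≠ 0) :
    (∀ i, 0 ≤ a i * a i₁) ∧ ∀ i, |a i| ≤ |a i₁| := by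
  have hm₁ : m i₁ = 1 := (hm i₁).resolve_left fun h => h0 (by rw [ha, h]; ring)
  have ha₁ : a i₁ = l i₁ * u := by rw [ha, hm₁, one_mul]
  refine ⟨fun i => ?_, fun i => ?_⟩ <;> rcases hm i with h | h <;>
    simp only [ha i, ha₁, h, zero_mul, mul_zero, abs_zero, abs_nonneg, le_refl, one_mul]
  · linarith [mul_nonneg (mul_nonneg (hl i) (hl i₁)) (mul_self_nonneg u)]
  · rw [abs_mul, abs_mul, abs_of_nonneg (hl i), abs_of_nonneg (hl i₁)]
    exact mul_le_mul_of_nonneg_right (hlmax i) (abs_nonneg u)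

theorem mask_mul_eq_of_ne_zero_imp {x U M : ℝ} (hM : M = if 0 < x * U then 1 else 0)
    (hU : x ≠ 0 → U = x) : M * U = x := by
  rcases eq_or_ne x 0 with rfl | hx
  · simp [hM]
  · rw [hM, hU hx, if_pos (mul_self_pos.mpr hx), one_mul]

theorem mask_mul_unified_eq_of_max_rescaler [Fintype ι] {l m : ι → ℝ} {u γ ε U M : ℝ}
    (ha : ∀ i, a i = l i * (m i * u)) (hm : ∀ i, m i = 0 ∨ m i = 1)
    (hl : ∀ i, 0 ≤ l i) (hlmax : ∀ i, l i ≤ l i₁)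
    (hγ : γ = Real.sign (∑ i, a i))
    (hε : γ ≠ 0 →
      (∃ i, Real.sign (a i) = γ ∧ |a i| = ε) ∧ (∀ i, Real.sign (a i) = γ → |a i| ≤ ε))
    (hU : U = γ * ε) (hM : M = if 0 < a i₁ * U then 1 else 0) :
    M * U = a i₁ :=
  mask_mul_eq_of_ne_zero_imp hM fun h0 =>
    have ⟨hal, hdom⟩ := aligned_dominant_of_rescaled_masks ha hm hl hlmax h0
    hU.trans (sign_mul_max_eq_of_aligned_of_dominant hal hdom h0 hγ hε)

end Unification

theorem stmt12_general
    (n d : ℕ)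
    (Δ : ℕ → Fin n → Fin d → ℝ)
    (γ ε U : ℕ → Fin d → ℝ)
    (M : ℕ → Fin n → Fin d → ℝ)
    (lam : ℕ → Fin n → ℝ)
    (hγ : ∀ (j : ℕ) k, γ (j+1) k = Real.sign (∑ i, Δ j i k))
    (hε : ∀ (j : ℕ) k, γ (j+1) k ≠ 0 →
      (∃ i, Real.sign (Δ j i k) = γ (j+1) k ∧ |Δ j i k| = ε (j+1) k) ∧
      (∀ i, Real.sign (Δ j i k) = γ (j+1) k → |Δ j i k| ≤ ε (j+1) k))
    (hU : ∀ (j : ℕ) k, U (j+1) k = γ (j+1) k * ε (j+1) k)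
    (hM : ∀ (j : ℕ) i k, M (j+1) i k = if 0 < Δ j i k * U (j+1) k then 1 else 0)
    (hden : ∀ (j : ℕ) i, ∑ k, |M (j+1) i k * U (j+1) k| ≠ 0)
    (hlam : ∀ (j : ℕ) i,
      lam (j+1) i = (∑ k, |Δ j i k|) / (∑ k, |M (j+1) i k * U (j+1) k|))
    (hstep : ∀ (j : ℕ) i k, Δ (j+1) i k = lam (j+1) i * (M (j+1) i k * U (j+1) k))
    (i₁ : Fin n)
    (hmax : ∀ (j : ℕ), 1 ≤ j → ∀ i : Fin n, lam j i ≤ lam j i₁) :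
    (∀ (j : ℕ), 1 ≤ j → Δ j i₁ = Δ 1 i₁) ∧ (∀ (j : ℕ), 2 ≤ j → lam j i₁ = 1) := by
  have reproduced (j : ℕ) (k : Fin d) : M (j+2) i₁ k * U (j+2) k = Δ (j+1) i₁ k :=
    mask_mul_unified_eq_of_max_rescaler (l := lam (j+1)) (m := (M (j+1) · k)) (hstep j · k)
      (fun i => by rw [hM]; split_ifs <;> simp)
      (fun i => by rw [hlam]; positivity) (hmax (j+1) j.succ_pos)
      (hγ (j+1) k) (hε (j+1) k) (hU (j+1) k) (hM (j+1) i₁ k)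
  have rescaler_one (j : ℕ) : lam (j+2) i₁ = 1 := by
    simp only [hlam (j+1) i₁, reproduced]
    exact div_self (by simpa only [reproduced] using hden (j+1) i₁)
  have fixed (j : ℕ) : Δ (j+2) i₁ = Δ (j+1) i₁ := by
    funext k
    rw [hstep, rescaler_one, one_mul, reproduced]
  refine ⟨fun j hj => ?_, fun j hj => ?_⟩
  · induction j, hj using Nat.le_induction with
    | base => rfl
    | succ j hj ih => obtain ⟨j, rfl⟩ := Nat.exists_eq_add_of_le' hj; rw [fixed, ih]
  · obtain ⟨j, rfl⟩ := Nat.exists_eq_add_of_le' hj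
    exact rescaler_one j

theorem stmt12
    (n d : ℕ) (hn : 1 ≤ n) (hd : 1 ≤ d)
    (Δ : ℕ → Fin n → Fin d → ℝ)
    (γ ε U : ℕ → Fin d → ℝ)
    (M : ℕ → Fin n → Fin d → ℝ)
    (lam : ℕ → Fin n → ℝ)
    (hγ : ∀ (j : ℕ) k, γ (j+1) k = Real.sign (∑ i, Δ j i k))
    (hε : ∀ (j : ℕ) k, γ (j+1) k ≠ 0 →
      (∃ i, Real.sign (Δ j i k) = γ (j+1) k ∧ |Δ j i k| = ε (j+1) k) ∧
      (∀ i, Real.sign (Δ j i k) = γ (j+1) k → |Δ j i k| ≤ ε (j+1) k))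
    (hε0 : ∀ (j : ℕ) k, γ (j+1) k = 0 → ε (j+1) k = 0)
    (hU : ∀ (j : ℕ) k, U (j+1) k = γ (j+1) k * ε (j+1) k)
    (hM : ∀ (j : ℕ) i k, M (j+1) i k = if 0 < Δ j i k * U (j+1) k then 1 else 0)
    (hden : ∀ (j : ℕ) i, ∑ k, |M (j+1) i k * U (j+1) k| ≠ 0)
    (hlam : ∀ (j : ℕ) i,
      lam (j+1) i = (∑ k, |Δ j i k|) / (∑ k, |M (j+1) i k * U (j+1) k|))
    (hstep : ∀ (j : ℕ) i k, Δ (j+1) i k = lam (j+1) i * (M (j+1) i k * U (j+1) k))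
    (i₁ : Fin n)
    (hmax : ∀ (j : ℕ), 1 ≤ j → ∀ i : Fin n, lam j i ≤ lam j i₁) :
    (∀ (j : ℕ), 1 ≤ j → Δ j i₁ = Δ 1 i₁) ∧ (∀ (j : ℕ), 2 ≤ j → lam j i₁ = 1) :=
  stmt12_general n d Δ γ ε U M lam hγ hε hU hM hden hlam hstep i₁ hmax
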